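/- arXiv:2301.06274 — 2 statements merged into one kernel-verified Lean document; each statement's English description precedes it below -/
import Mathlib

section
/- Let A be a left brace such that A³ = ⟨0⟩. Then for every element a ∈ A and every integer m one has aᵐ = m·a + ((m² − m)/2)·(a ⋆ a), where aᵐ is the m-th power of a in the multiplicative group, m·a is the m-th additive multiple, and (m² − m)/2 is an integer. -/
/-- A left brace: `(A, +)` is an abelian group, `(A, *)` is a group, and
`a * (b + c) = a * b + a * c - a` for all `a b c`. -/
class LeftBrace (A : Type*) extends AddCommGroup A, Group A where
  mul_add_eq : ∀ a b c : A, a * (b + c) = a * b + a * c - a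

namespace LeftBrace

variable {A : Type*} [LeftBrace A]

/-- The star operation of a left brace: `a ⋆ b = a * b - a - b`. -/
def star (a b : A) : A := a * b - a - b

/-- `K ⋆ L`: the subgroup of the additive group of `A` generated by all
`x ⋆ y` with `x ∈ K`, `y ∈ L`. -/
def setStar (K L : Set A) : AddSubgroup A :=
  AddSubgroup.closure (Set.image2 star K L)

/-- A subbrace of `A`: a subset that is simultaneously a subgroup of the
additive group of `A` and a subgroup of the multiplicative group of `A`. -/
def IsSubbrace (S : Set A) : Prop :=
  (0 : A) ∈ S ∧ (∀ x ∈ S, ∀ y ∈ S, x + y ∈ S) ∧ (∀ x ∈ S, -x ∈ S) ∧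
    (1 : A) ∈ S ∧ (∀ x ∈ S, ∀ y ∈ S, x * y ∈ S) ∧ (∀ x ∈ S, x⁻¹ ∈ S)

/-- A left ideal of `A`: a subbrace `S` with `a ⋆ b ∈ S` for all `a ∈ A`, `b ∈ S`. -/
def IsLeftIdeal (S : Set A) : Prop :=
  IsSubbrace S ∧ ∀ a : A, ∀ b ∈ S, star a b ∈ S

/-- An ideal of `A`: a subbrace `S` with `a ⋆ z ∈ S` and `z ⋆ a ∈ S`
for all `a ∈ A`, `z ∈ S`. -/
def IsIdeal (S : Set A) : Prop :=
  IsSubbrace S ∧ ∀ a : A, ∀ z ∈ S, star a z ∈ S ∧ star z a ∈ S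

/-- The left series of the brace `A`, with the indexing shifted by one:
`leftSeriesN A 0 = A¹ = A` and `leftSeriesN A n = Aⁿ⁺¹ = A ⋆ Aⁿ`.
In particular `leftSeriesN A 1 = A²` and `leftSeriesN A 2 = A³`. -/
def leftSeriesN (A : Type*) [LeftBrace A] : ℕ → AddSubgroup A
  | 0 => ⊤
  | n + 1 => setStar Set.univ ((leftSeriesN A n : AddSubgroup A) : Set A)

/-- The right series of the brace `A`, with the indexing shifted by one:
`rightSeriesN A 0 = A⁽¹⁾ = A` and `rightSeriesN A n = A⁽ⁿ⁺¹⁾ = A⁽ⁿ⁾ ⋆ A`.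
In particular `rightSeriesN A 2 = A⁽³⁾` and `rightSeriesN A 3 = A⁽⁴⁾`. -/
def rightSeriesN (A : Type*) [LeftBrace A] : ℕ → AddSubgroup A
  | 0 => ⊤
  | n + 1 => setStar ((rightSeriesN A n : AddSubgroup A) : Set A) Set.univ

end LeftBrace

open LeftBrace

/-!
Write `λ_x y = x * y - x`; the brace axiom says exactly that `λ_x` is additive, and
`x * y = λ_x y + x`. Since `s := a ⋆ a` lies in `A²`, the hypothesis `A³ = 0` gives
`x ⋆ s = 0`, i.e. `λ_x s = s` for all `x`, while `λ_a a = a + s`. Hence left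
multiplication by `a` sends `m • a + k • s` to `(m + 1) • a + (k + m) • s`, and the
triangular numbers `(m² - m) / 2` satisfy the same recursion in `m`.
-/

theorem zpow_eq_of_mul_eq_succ {G : Type*} [Group G] {a : G} {f : ℤ → G} (h0 : f 0 = 1)
    (hsucc : ∀ m, a * f m = f (m + 1)) (m : ℤ) : a ^ m = f m := by
  induction m using Int.induction_on with
  | zero => rw [zpow_zero, h0]
  | succ n ih => rw [← hsucc, ← ih, ← zpow_one_add, add_comm]
  | pred n ih =>
    refine mul_left_cancel (a := a) ?_
    rw [hsucc, sub_add_cancel, ← ih, ← zpow_one_add, add_sub_cancel]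

theorem Int.triangle_succ (m : ℤ) : ((m + 1) ^ 2 - (m + 1)) / 2 = (m ^ 2 - m) / 2 + m := by
  rw [← Int.add_mul_ediv_right _ _ two_ne_zero]
  ring_nf

namespace LeftBrace

variable {A : Type*} [LeftBrace A]

theorem mul_zero_eq_self (x : A) : x * 0 = x := by
  have h := mul_add_eq x 0 0
  rw [add_zero, eq_sub_iff_add_eq] at h
  exact (add_left_cancel h).symm

theorem one_eq_zero : (1 : A) = 0 := by
  simpa using (mul_zero_eq_self (1 : A)).symm

def lambda (x : A) : A →+ A :=
  AddMonoidHom.mk' (fun y => x * y - x) fun b c => by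
    simp only [mul_add_eq]
    abel

theorem lambda_apply (x y : A) : lambda x y = x * y - x := rfl

theorem mul_eq_lambda_add (x y : A) : x * y = lambda x y + x := by
  rw [lambda_apply, sub_add_cancel]

theorem star_eq_lambda_sub (x y : A) : star x y = lambda x y - y := by
  rw [lambda_apply, star]

theorem lambda_self (x : A) : lambda x x = x + star x x := by
  rw [star_eq_lambda_sub]
  abel

theorem star_mem_leftSeriesN_succ {n : ℕ} (x : A) {y : A} (hy : y ∈ leftSeriesN A n) :
    star x y ∈ leftSeriesN A (n + 1) :=
  AddSubgroup.subset_closure (Set.mem_image2_of_mem (Set.mem_univ x) hy)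

theorem lambda_star_self_of_leftSeriesN_two_eq_bot (h3 : leftSeriesN A 2 = ⊥) (x a : A) :
    lambda x (star a a) = star a a := by
  have hmem : star x (star a a) ∈ leftSeriesN A 2 :=
    star_mem_leftSeriesN_succ x (star_mem_leftSeriesN_succ a (AddSubgroup.mem_top a))
  rw [h3, AddSubgroup.mem_bot, star_eq_lambda_sub, sub_eq_zero] at hmem
  exact hmem

theorem mul_zsmul_add_zsmul_star_self (h3 : leftSeriesN A 2 = ⊥) (a : A) (m k : ℤ) :
    a * (m • a + k • star a a) = (m + 1) • a + (k + m) • star a a := by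
  rw [mul_eq_lambda_add, map_add, map_zsmul, map_zsmul, lambda_self,
    lambda_star_self_of_leftSeriesN_two_eq_bot h3]
  module

end LeftBrace

/-- If `A` is a left brace with `A³ = ⟨0⟩` (here
`A³ = A ⋆ (A ⋆ A) = leftSeriesN A 2`), then for every `a ∈ A` and every
integer `m` one has `aᵐ = m·a + ((m² − m)/2)·(a ⋆ a)` (note that `m² − m`
is even, so the integer division `(m² − m)/2` is exact). -/
theorem zpow_eq {A : Type*} [LeftBrace A]
    (h3 : leftSeriesN A 2 = ⊥) (a : A) (m : ℤ) :
    a ^ m = m • a + ((m ^ 2 - m) / 2) • star a a := by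
  refine zpow_eq_of_mul_eq_succ (f := fun n => n • a + ((n ^ 2 - n) / 2) • star a a) ?_
    (fun n => ?_) m
  · simp [one_eq_zero]
  · rw [mul_zsmul_add_zsmul_star_self h3, Int.triangle_succ]
end

section
/- Let A be a left brace such that A³ = ⟨0⟩, let a ∈ A, and define a₁ = a and a_{j+1} = a_j ⋆ a for all j ∈ ℕ. Then the subbrace of A generated by a equals the set of all elements of the form Σ_{j ∈ ℕ} k_j·a_j, where the k_j are integers and k_j ≠ 0 for only finitely many indices j. -/
open LeftBrace

namespace LeftBrace

/-- The sequence `a₁ = a`, `a_{j+1} = a_j ⋆ a` (indexed from `0`, so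
`aSeq a j = a_{j+1}`). -/
def aSeq {A : Type*} [LeftBrace A] (a : A) : ℕ → A
  | 0 => a
  | j + 1 => star (aSeq a j) a

end LeftBrace



section StarFacts

variable {A : Type*} [LeftBrace A]

lemma lb_lin1 {M : Type*} [AddCommGroup M] {a b c d : M} (h : a = b)
    (h2 : c - d = a - b) : c = d := by
  apply eq_of_sub_eq_zero; rw [h2, h, sub_self]

lemma lb_lin2 {M : Type*} [AddCommGroup M] {a b a' b' c d : M} (h : a = b) (h' : a' = b')
    (h2 : c - d = (a - b) + (a' - b')) : c = d := by
  apply eq_of_sub_eq_zero; rw [h2, h, h', sub_self, sub_self, add_zero]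

lemma lb_mul_zero (x : A) : x * 0 = x := by
  have h := LeftBrace.mul_add_eq x 0 0
  rw [add_zero] at h
  exact lb_lin1 h.symm (by abel)

lemma lb_one_eq_zero : (1 : A) = 0 := by
  have h := LeftBrace.mul_add_eq (1 : A) 0 0
  rw [add_zero, one_mul] at h
  exact lb_lin1 h (by abel)

lemma lb_mul_neg (x y : A) : x * (-y) = x + x - x * y := by
  have h := LeftBrace.mul_add_eq x y (-y)
  rw [add_neg_cancel, lb_mul_zero] at h
  exact lb_lin1 h.symm (by abel)

lemma lb_star_add (x y z : A) : LeftBrace.star x (y + z) =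
    LeftBrace.star x y + LeftBrace.star x z := by
  unfold LeftBrace.star
  rw [LeftBrace.mul_add_eq]
  abel

lemma lb_star_zero (x : A) : LeftBrace.star x 0 = 0 := by
  unfold LeftBrace.star
  rw [lb_mul_zero]
  abel

lemma lb_zero_star (x : A) : LeftBrace.star 0 x = 0 := by
  have h : (0 : A) * x = x := by rw [← lb_one_eq_zero, one_mul]
  unfold LeftBrace.star
  rw [h]
  abel

def lb_starHom (x : A) : A →+ A := AddMonoidHom.mk' (LeftBrace.star x) (lb_star_add x)

lemma lb_star_zsmul (x : A) (k : ℤ) (y : A) :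
    LeftBrace.star x (k • y) = k • LeftBrace.star x y :=
  map_zsmul (lb_starHom x) k y

lemma lb_star_neg (x y : A) : LeftBrace.star x (-y) = - LeftBrace.star x y :=
  map_neg (lb_starHom x) y

lemma lb_mul_eq (x y : A) : x * y = x + y + LeftBrace.star x y := by
  unfold LeftBrace.star; abel

lemma lb_mul_star (x y c : A) : LeftBrace.star (x * y) c =
    LeftBrace.star x (LeftBrace.star y c) + LeftBrace.star y c + LeftBrace.star x c := by
  unfold LeftBrace.star
  have h1 : y * c - y - c = y * c + -y + -c := by abel
  rw [h1, LeftBrace.mul_add_eq, LeftBrace.mul_add_eq, lb_mul_neg, lb_mul_neg, ← mul_assoc]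
  abel

end StarFacts

section H3Facts

variable {A : Type*} [LeftBrace A] (h3 : leftSeriesN A 2 = ⊥)

lemma lb_star_mem_A2 (x y : A) : LeftBrace.star x y ∈ leftSeriesN A 1 := by
  show LeftBrace.star x y ∈ setStar Set.univ ((leftSeriesN A 0 : AddSubgroup A) : Set A)
  exact AddSubgroup.subset_closure
    (Set.mem_image2_of_mem (Set.mem_univ x) (by simp [leftSeriesN]))

include h3 in
lemma lb_star_A2 (x : A) {v : A} (hv : v ∈ leftSeriesN A 1) : LeftBrace.star x v = 0 := by
  have hm : LeftBrace.star x v ∈ leftSeriesN A 2 := by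
    show LeftBrace.star x v ∈ setStar Set.univ ((leftSeriesN A 1 : AddSubgroup A) : Set A)
    exact AddSubgroup.subset_closure (Set.mem_image2_of_mem (Set.mem_univ x) hv)
  rw [h3] at hm
  simpa using hm

include h3 in
lemma lb_star_star (x y z : A) :
    LeftBrace.star x (LeftBrace.star y z) = 0 :=
  lb_star_A2 h3 x (lb_star_mem_A2 y z)

include h3 in
lemma lb_mul_star' (x y c : A) : LeftBrace.star (x * y) c =
    LeftBrace.star x c + LeftBrace.star y c := by
  rw [lb_mul_star, lb_star_star h3]
  abel

include h3 in
lemma lb_mul_of_A2 (u : A) {v : A} (hv : v ∈ leftSeriesN A 1) : u * v = u + v := by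
  have h := lb_star_A2 h3 u hv
  unfold LeftBrace.star at h
  exact lb_lin1 h (by abel)

include h3 in
lemma lb_add_star_A2 (u c : A) {v : A} (hv : v ∈ leftSeriesN A 1) :
    LeftBrace.star (u + v) c = LeftBrace.star u c + LeftBrace.star v c := by
  rw [← lb_mul_of_A2 h3 u hv, lb_mul_star' h3]

include h3 in
lemma lb_neg_star_A2 (c : A) {v : A} (hv : v ∈ leftSeriesN A 1) :
    LeftBrace.star (-v) c = - LeftBrace.star v c := by
  have h := lb_add_star_A2 h3 v c (neg_mem hv)
  rw [add_neg_cancel, lb_zero_star] at h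
  exact lb_lin1 h.symm (by abel)

include h3 in
lemma lb_add_mul (x y : A) : x + y = x * (y - LeftBrace.star x y) := by
  have h2 : x * (LeftBrace.star x y) = x + LeftBrace.star x y :=
    lb_mul_of_A2 h3 x (lb_star_mem_A2 x y)
  rw [sub_eq_add_neg, LeftBrace.mul_add_eq, lb_mul_neg, h2, lb_mul_eq]
  abel

include h3 in
lemma lb_add_star (x y c : A) : LeftBrace.star (x + y) c =
    LeftBrace.star x c + LeftBrace.star y c
      - LeftBrace.star (LeftBrace.star x y) c := by
  rw [lb_add_mul h3 x y, lb_mul_star' h3, sub_eq_add_neg,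
    lb_add_star_A2 h3 y c (neg_mem (lb_star_mem_A2 x y)),
    lb_neg_star_A2 h3 c (lb_star_mem_A2 x y)]
  abel

include h3 in
lemma lb_inv_star (x c : A) : LeftBrace.star x⁻¹ c = - LeftBrace.star x c := by
  have h := lb_mul_star' h3 x x⁻¹ c
  rw [mul_inv_cancel, lb_one_eq_zero, lb_zero_star] at h
  exact lb_lin1 h.symm (by abel)

include h3 in
lemma lb_inv_eq (x : A) : x⁻¹ = -x + LeftBrace.star x x := by
  have h1 : LeftBrace.star x⁻¹ x = - LeftBrace.star x x := lb_inv_star h3 x x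
  have h2 : LeftBrace.star x⁻¹ x = -x⁻¹ - x := by
    unfold LeftBrace.star
    rw [inv_mul_cancel, lb_one_eq_zero]
    abel
  exact lb_lin1 (h2.symm.trans h1).symm (by abel)

include h3 in
lemma lb_neg_star (x c : A) : LeftBrace.star (-x) c =
    - LeftBrace.star x c - LeftBrace.star (LeftBrace.star x x) c := by
  have h := lb_add_star h3 x (-x) c
  rw [add_neg_cancel, lb_zero_star, lb_star_neg,
    lb_neg_star_A2 h3 c (lb_star_mem_A2 x x)] at h
  exact lb_lin1 h.symm (by abel)

end H3Facts

/-- Let `A` be a left brace with `A³ = ⟨0⟩` (here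
`A³ = A ⋆ (A ⋆ A) = leftSeriesN A 2`), let `a ∈ A`, and let `a₁ = a`,
`a_{j+1} = a_j ⋆ a`. Then the subbrace of `A` generated by `a` (the
intersection of all subbraces containing `a`) is exactly the set of all
finite sums `Σ_j k_j · a_j` with integer coefficients. -/
theorem generated_subbrace_eq {A : Type*} [LeftBrace A]
    (h3 : leftSeriesN A 2 = ⊥) (a : A) :
    ⋂₀ {S : Set A | IsSubbrace S ∧ a ∈ S} =
      {x : A | ∃ k : ℕ →₀ ℤ, x = k.sum fun j c => c • aSeq a j} := by
  classical
  set B : AddSubgroup A := AddSubgroup.closure (Set.range (aSeq a)) with hBdef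
  set B₂ : AddSubgroup A := AddSubgroup.closure (Set.range fun j => aSeq a (j + 1)) with hB2def
  have hB2le : B₂ ≤ leftSeriesN A 1 := by
    refine (AddSubgroup.closure_le _).mpr ?_
    rintro x ⟨j, rfl⟩
    exact lb_star_mem_A2 (aSeq a j) a
  have hB2B : B₂ ≤ B := by
    refine (AddSubgroup.closure_le _).mpr ?_
    rintro x ⟨j, rfl⟩
    exact AddSubgroup.subset_closure ⟨j + 1, rfl⟩
  have haB : a ∈ B := AddSubgroup.subset_closure ⟨0, rfl⟩
  have hB2star : ∀ v ∈ B₂, LeftBrace.star v a ∈ B₂ := by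
    intro v hv
    refine AddSubgroup.closure_induction
      (p := fun x _ => LeftBrace.star x a ∈ B₂) ?_ ?_ ?_ ?_ hv
    · rintro x ⟨j, rfl⟩
      exact AddSubgroup.subset_closure ⟨j + 1, rfl⟩
    · show LeftBrace.star 0 a ∈ B₂
      rw [lb_zero_star]; exact zero_mem _
    · intro x y hx hy ihx ihy
      rw [lb_add_star_A2 h3 x a (hB2le hy)]
      exact add_mem ihx ihy
    · intro x hx ihx
      rw [lb_neg_star_A2 h3 a (hB2le hx)]
      exact neg_mem ihx
  have hdecomp : ∀ x ∈ B, ∃ k : ℤ, ∃ v ∈ B₂, x = k • a + v := by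
    intro x hx
    refine AddSubgroup.closure_induction
      (p := fun x _ => ∃ k : ℤ, ∃ v ∈ B₂, x = k • a + v) ?_ ?_ ?_ ?_ hx
    · rintro x ⟨j, rfl⟩
      cases j with
      | zero => exact ⟨1, 0, zero_mem _, by simp [aSeq]⟩
      | succ j => exact ⟨0, aSeq a (j + 1), AddSubgroup.subset_closure ⟨j, rfl⟩, by simp⟩
    · exact ⟨0, 0, zero_mem _, by simp⟩
    · rintro x y hx hy ⟨k, v, hv, rfl⟩ ⟨k', v', hv', rfl⟩
      exact ⟨k + k', v + v', add_mem hv hv', by rw [add_zsmul]; abel⟩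
    · rintro x hx ⟨k, v, hv, rfl⟩
      exact ⟨-k, -v, neg_mem hv, by rw [neg_zsmul]; abel⟩
  have hstar_smul : ∀ x : A, ∀ y ∈ B,
      ∃ k : ℤ, LeftBrace.star x y = k • LeftBrace.star x a := by
    intro x y hy
    obtain ⟨k, v, hv, rfl⟩ := hdecomp y hy
    refine ⟨k, ?_⟩
    rw [lb_star_add, lb_star_zsmul, lb_star_A2 h3 x (hB2le hv), add_zero]
  have hstar_a : ∀ x ∈ B, LeftBrace.star x a ∈ B₂ := by
    intro x hx
    refine AddSubgroup.closure_induction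
      (p := fun x _ => LeftBrace.star x a ∈ B₂) ?_ ?_ ?_ ?_ hx
    · rintro x ⟨j, rfl⟩
      exact AddSubgroup.subset_closure ⟨j, rfl⟩
    · show LeftBrace.star 0 a ∈ B₂
      rw [lb_zero_star]; exact zero_mem _
    · intro x y hx hy ihx ihy
      rw [lb_add_star h3]
      obtain ⟨k, hk⟩ := hstar_smul x y hy
      have hmem : LeftBrace.star (LeftBrace.star x y) a ∈ B₂ := by
        rw [hk]
        exact hB2star _ (AddSubgroup.zsmul_mem _ ihx k)
      exact sub_mem (add_mem ihx ihy) hmem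
    · intro x hx ihx
      rw [lb_neg_star h3]
      obtain ⟨k, hk⟩ := hstar_smul x x hx
      have hmem : LeftBrace.star (LeftBrace.star x x) a ∈ B₂ := by
        rw [hk]
        exact hB2star _ (AddSubgroup.zsmul_mem _ ihx k)
      exact sub_mem (neg_mem ihx) hmem
  have hstarB : ∀ x ∈ B, ∀ y ∈ B, LeftBrace.star x y ∈ B₂ := by
    intro x hx y hy
    obtain ⟨k, hk⟩ := hstar_smul x y hy
    rw [hk]
    exact AddSubgroup.zsmul_mem _ (hstar_a x hx) k
  have hsub : IsSubbrace (B : Set A) := by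
    refine ⟨zero_mem _, fun x hx y hy => add_mem hx hy, fun x hx => neg_mem hx, ?_, ?_, ?_⟩
    · show (1 : A) ∈ B
      rw [lb_one_eq_zero]
      exact zero_mem _
    · intro x hx y hy
      show x * y ∈ B
      rw [lb_mul_eq]
      exact add_mem (add_mem hx hy) (hB2B (hstarB x hx y hy))
    · intro x hx
      show x⁻¹ ∈ B
      rw [lb_inv_eq h3]
      exact add_mem (neg_mem hx) (hB2B (hstarB x hx x hx))
  have hBmem : (B : Set A) ∈ {S : Set A | IsSubbrace S ∧ a ∈ S} := ⟨hsub, haB⟩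
  have hBsub : ∀ S ∈ {S : Set A | IsSubbrace S ∧ a ∈ S}, (B : Set A) ⊆ S := by
    rintro S ⟨⟨h0, hadd, hneg, h1, hmul, hinv⟩, haS⟩ x hx
    refine AddSubgroup.closure_induction (p := fun x _ => x ∈ S) ?_ h0
      (fun u v _ _ hu hv => hadd u hu v hv) (fun u _ hu => hneg u hu) hx
    rintro _ ⟨j, rfl⟩
    induction j with
    | zero => exact haS
    | succ j ih =>
      show aSeq a j * a - aSeq a j - a ∈ S
      rw [sub_eq_add_neg, sub_eq_add_neg]
      exact hadd _ (hadd _ (hmul _ ih _ haS) _ (hneg _ ih)) _ (hneg _ haS)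
  have hBfin : ∀ x : A, x ∈ B ↔ ∃ k : ℕ →₀ ℤ, x = k.sum fun j c => c • aSeq a j := by
    intro x
    rw [hBdef, ← Submodule.span_int_eq_addSubgroupClosure, Submodule.mem_toAddSubgroup,
      Finsupp.mem_span_range_iff_exists_finsupp]
    exact exists_congr fun k => eq_comm
  ext x
  constructor
  · intro hx
    exact (hBfin x).mp (Set.mem_sInter.mp hx _ hBmem)
  · intro hk
    exact Set.mem_sInter.mpr fun S hS => hBsub S hS ((hBfin x).mpr hk)
end
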